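/- For every squarefree positive even integer D ≤ 1000 (D ≡ 2 mod 4), the ring ℤ[√D] contains no principal ideal of norm at most 2D whose image under the canonical embedding of ℚ(√D) is a well-rounded lattice. -/

import Mathlib

noncomputable section

open scoped BigOperators

/-- Squared Euclidean norm on `ℝⁿ`. -/
def sqnorm {n : ℕ} (x : Fin n → ℝ) : ℝ := ∑ i, (x i) ^ 2

/-- The minimum distance `λ₁` of a lattice: the infimum of squared norms of nonzero vectors. -/
def lambda1 {n : ℕ} (L : Submodule ℤ (Fin n → ℝ)) : ℝ :=
  sInf {r : ℝ | ∃ x ∈ L, x ≠ 0 ∧ sqnorm x = r}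

/-- A minimal vector of the lattice `L`. -/
def IsMinVec {n : ℕ} (L : Submodule ℤ (Fin n → ℝ)) (x : Fin n → ℝ) : Prop :=
  x ∈ L ∧ x ≠ 0 ∧ sqnorm x = lambda1 L

/-- A lattice is well-rounded if it has `n` linearly independent minimal vectors. -/
def IsWellRounded {n : ℕ} (L : Submodule ℤ (Fin n → ℝ)) : Prop :=
  ∃ v : Fin n → Fin n → ℝ, (∀ i, IsMinVec L (v i)) ∧ LinearIndependent ℝ v

/-- `L` is a full-rank lattice in `ℝⁿ`. -/
def IsFullLattice {n : ℕ} (L : Submodule ℤ (Fin n → ℝ)) : Prop :=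
  ∃ b : Fin n → Fin n → ℝ, LinearIndependent ℝ b ∧ L = Submodule.span ℤ (Set.range b)

/-- Covolume of the lattice spanned by the basis `b`. -/
def covolOf {n : ℕ} (b : Fin n → Fin n → ℝ) : ℝ := |Matrix.det (Matrix.of b)|

/-- The Hermite constant in dimension `n`. -/
def hermiteConstant (n : ℕ) : ℝ :=
  sSup {c : ℝ | ∃ (L : Submodule ℤ (Fin n → ℝ)) (b : Fin n → Fin n → ℝ),
    LinearIndependent ℝ b ∧ L = Submodule.span ℤ (Set.range b) ∧
    c = lambda1 L / (covolOf b) ^ ((2 : ℝ) / n)}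

/-- Canonical embedding of `a + b √D` into `ℝ²` for the real quadratic field `ℚ(√D)`. -/
def embQ (D a b : ℝ) : Fin 2 → ℝ := ![a + b * Real.sqrt D, a - b * Real.sqrt D]

/-- The lattice `ℤⁿ` inside `ℝⁿ`. -/
def intLat (n : ℕ) : Submodule ℤ (Fin n → ℝ) :=
  Submodule.span ℤ (Set.range fun i : Fin n => (Pi.single i 1 : Fin n → ℝ))

private lemma zmod8_lemma : ∀ e j m b : ZMod 8, m^2 ≠ b^2 + (4*e+2)*(2*j+1)^2 := by decide

private lemma zmod4_lemma : ∀ a b c d e : ZMod 4,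
    (a+a)^2 + (4*c+2)*(d+d)^2 ≠ (b+b)^2 + (4*c+2)*(2*e+1)^2 := by decide

private lemma keyA (D m b k : ℤ) (hD : D % 4 = 2) (hk : Odd k) (h : m^2 = b^2 + D*k^2) :
    False := by
  obtain ⟨e, he⟩ : ∃ e, D = 4*e+2 := ⟨D/4, by omega⟩
  obtain ⟨j, hj⟩ := hk
  rw [he, hj] at h
  have h8 := congrArg (fun z : ℤ => (z : ZMod 8)) h
  push_cast at h8
  exact zmod8_lemma e j m b h8

private lemma key_aux (D : ℤ) (hD : D % 4 = 2) :
    ∀ n : ℕ, ∀ k u₀ t₀ u₁ t₁ n₀ n₁ : ℤ, k.natAbs = n →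
      u₀^2 + D*t₀^2 = u₁^2 + D*t₁^2 →
      u₀^2 - D*t₀^2 = k*n₀ → u₁^2 - D*t₁^2 = k*n₁ →
      k = u₀*t₁ - u₁*t₀ → k = 0 := by
  intro n
  induction n using Nat.strong_induction_on with
  | _ n ih =>
  intro k u₀ t₀ u₁ t₁ n₀ n₁ hn hm h₀ h₁ hk
  by_contra hk0
  obtain ⟨c, hc⟩ : ∃ c, D = 4*c+2 := ⟨D/4, by omega⟩
  have hid : (u₀^2 + D*t₀^2)^2 = (u₀*u₁+D*t₀*t₁)^2 + D*k^2 := by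
    rw [hk]; linear_combination (u₀^2 + D*t₀^2) * hm
  rcases Int.even_or_odd k with hke | hko
  · -- k even
    obtain ⟨k₁, hk₁⟩ := hke
    have hu₀ : Even u₀ := by
      have h2 : Even (u₀^2) := by
        refine ⟨k₁*n₀ + (2*c+1)*t₀^2, ?_⟩
        have : u₀^2 = k*n₀ + D*t₀^2 := by linarith
        rw [this, hk₁, hc]; ring
      exact (Int.even_pow' (by norm_num)).mp h2
    have hu₁ : Even u₁ := by
      have h2 : Even (u₁^2) := by
        refine ⟨k₁*n₁ + (2*c+1)*t₁^2, ?_⟩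
        have : u₁^2 = k*n₁ + D*t₁^2 := by linarith
        rw [this, hk₁, hc]; ring
      exact (Int.even_pow' (by norm_num)).mp h2
    obtain ⟨A₀, hA₀⟩ := hu₀
    obtain ⟨A₁, hA₁⟩ := hu₁
    rcases Int.even_or_odd t₀ with ht₀ | ht₀ <;> rcases Int.even_or_odd t₁ with ht₁ | ht₁
    · -- both t even : descent
      obtain ⟨s₀, hs₀⟩ := ht₀
      obtain ⟨s₁, hs₁⟩ := ht₁
      have hk4 : k = 4*(A₀*s₁ - A₁*s₀) := by
        rw [hk, hA₀, hA₁, hs₀, hs₁]; ring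
      have hk₂0 : A₀*s₁ - A₁*s₀ ≠ 0 := by
        intro h; rw [h, mul_zero] at hk4; exact hk0 hk4
      have hlt : (A₀*s₁ - A₁*s₀).natAbs < n := by
        have h1 : k.natAbs = 4 * (A₀*s₁ - A₁*s₀).natAbs := by
          rw [hk4, Int.natAbs_mul]; rfl
        have h2 : 1 ≤ (A₀*s₁ - A₁*s₀).natAbs := Int.natAbs_pos.mpr hk₂0
        omega
      have hm' : A₀^2 + D*s₀^2 = A₁^2 + D*s₁^2 := by
        have h4 : (4:ℤ) * (A₀^2 + D*s₀^2) = 4 * (A₁^2 + D*s₁^2) := by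
          rw [hA₀, hA₁, hs₀, hs₁] at hm; linear_combination hm
        exact mul_left_cancel₀ (by norm_num) h4
      have h₀' : A₀^2 - D*s₀^2 = (A₀*s₁ - A₁*s₀)*n₀ := by
        have h4 : (4:ℤ) * (A₀^2 - D*s₀^2) = 4 * ((A₀*s₁ - A₁*s₀)*n₀) := by
          rw [hA₀, hs₀] at h₀; rw [hk4] at h₀; linear_combination h₀
        exact mul_left_cancel₀ (by norm_num) h4
      have h₁' : A₁^2 - D*s₁^2 = (A₀*s₁ - A₁*s₀)*n₁ := by
        have h4 : (4:ℤ) * (A₁^2 - D*s₁^2) = 4 * ((A₀*s₁ - A₁*s₀)*n₁) := by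
          rw [hA₁, hs₁] at h₁; rw [hk4] at h₁; linear_combination h₁
        exact mul_left_cancel₀ (by norm_num) h4
      exact hk₂0 (ih _ hlt _ A₀ s₀ A₁ s₁ n₀ n₁ rfl hm' h₀' h₁' rfl)
    · -- t₀ even, t₁ odd : mod 4 contradiction
      obtain ⟨s₀, hs₀⟩ := ht₀
      obtain ⟨s₁, hs₁⟩ := ht₁
      rw [hA₀, hA₁, hs₀, hs₁, hc] at hm
      have h4 := congrArg (fun z : ℤ => (z : ZMod 4)) hm
      push_cast at h4
      exact zmod4_lemma A₀ A₁ c s₀ s₁ h4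
    · -- t₀ odd, t₁ even
      obtain ⟨s₀, hs₀⟩ := ht₀
      obtain ⟨s₁, hs₁⟩ := ht₁
      rw [hA₀, hA₁, hs₀, hs₁, hc] at hm
      have h4 := congrArg (fun z : ℤ => (z : ZMod 4)) hm.symm
      push_cast at h4
      exact zmod4_lemma A₁ A₀ c s₁ s₀ h4
    · -- both t odd
      obtain ⟨s₀, hs₀⟩ := ht₀
      obtain ⟨s₁, hs₁⟩ := ht₁
      have hk₁odd : Odd k₁ := by
        have hprod : k₁*n₀ = 2*A₀^2 - (2*c+1)*(2*s₀+1)^2 := by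
          have h2 : (2:ℤ) * (k₁*n₀) = 2 * (2*A₀^2 - (2*c+1)*(2*s₀+1)^2) := by
            rw [hA₀, hs₀, hc, hk₁] at h₀; linear_combination -h₀
          exact mul_left_cancel₀ (by norm_num) h2
        have hodd : Odd (k₁*n₀) := by
          rw [hprod]
          exact (even_two_mul _).sub_odd ((odd_two_mul_add_one c).mul ((odd_two_mul_add_one s₀).pow))
        exact (Int.odd_mul.mp hodd).1
      have hmeven : Even (u₀^2 + D*t₀^2) := by
        refine ⟨2*A₀^2 + (2*c+1)*t₀^2, ?_⟩
        rw [hA₀, hc]; ring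
      obtain ⟨m₁, hm₁⟩ := hmeven
      have hBeven : Even (u₀*u₁ + D*t₀*t₁) := by
        refine ⟨2*A₀*A₁ + (2*c+1)*t₀*t₁, ?_⟩
        rw [hA₀, hA₁, hc]; ring
      obtain ⟨B₁, hB₁⟩ := hBeven
      have hid' : m₁^2 = B₁^2 + D*k₁^2 := by
        have h4 : (4:ℤ) * (m₁^2) = 4 * (B₁^2 + D*k₁^2) := by
          rw [hm₁, hB₁, hk₁] at hid; linear_combination hid
        exact mul_left_cancel₀ (by norm_num) h4
      exact keyA D m₁ B₁ k₁ hD hk₁odd hid'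
  · -- k odd : mod 8 contradiction
    exact keyA D _ _ k hD hko hid

private lemma embQ_add_smul (d a b P Q P' Q' : ℝ) :
    a • embQ d P Q + b • embQ d P' Q' = embQ d (a*P+b*P') (a*Q+b*Q') := by
  funext i
  fin_cases i <;> simp [embQ] <;> ring

private lemma embQ_zero (d : ℝ) : embQ d 0 0 = 0 := by
  funext i; fin_cases i <;> simp [embQ]

private lemma sqnorm_embQ (d u t : ℝ) (hd : 0 ≤ d) :
    sqnorm (embQ d u t) = 2*u^2 + 2*d*t^2 := by
  simp [sqnorm, embQ, Fin.sum_univ_two]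
  linear_combination (2*t^2) * (Real.sq_sqrt hd)

private lemma sqnorm_nonneg' {n : ℕ} (x : Fin n → ℝ) : 0 ≤ sqnorm x :=
  Finset.sum_nonneg fun _ _ => sq_nonneg _

private lemma int_posM (D u t : ℤ) (hD : 2 ≤ D) (h : ¬(u = 0 ∧ t = 0)) :
    0 < u^2 + D*t^2 := by
  rcases eq_or_ne t 0 with rfl | ht
  · have hu : u ≠ 0 := by tauto
    have h1 : 1 ≤ |u| := Int.one_le_abs hu
    nlinarith [sq_abs u, abs_nonneg u]
  · have h1 : 1 ≤ |t| := Int.one_le_abs ht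
    nlinarith [sq_abs t, abs_nonneg t, sq_nonneg u]


set_option maxHeartbeats 2000000 in
/-- for every squarefree positive `D ≡ 2 (mod 4)` with `D ≤ 1000`,
`ℤ[√D]` has no principal ideal `(x + y√D)` of norm `|x² − Dy²| ≤ 2D` whose
canonical-embedding lattice (spanned by `σ(x + y√D)` and `σ((x + y√D)√D)`) is
well-rounded. -/
theorem stmt_14 (D : ℕ) (hsf : Squarefree D) (hmod : D % 4 = 2) (hle : D ≤ 1000) :
    ∀ x y : ℤ, ¬(x = 0 ∧ y = 0) → |x ^ 2 - (D : ℤ) * y ^ 2| ≤ 2 * (D : ℤ) →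
      ¬ IsWellRounded (Submodule.span ℤ
        ({embQ D x y, embQ D ((D : ℝ) * y) x} : Set (Fin 2 → ℝ))) := by
  intro x y hxy hNle hWR
  have hD2 : 2 ≤ D := by omega
  have hDR : (0:ℝ) ≤ (D:ℝ) := by positivity
  have hsne : Real.sqrt (D:ℝ) ≠ 0 := by
    refine ne_of_gt (Real.sqrt_pos.mpr ?_)
    exact_mod_cast Nat.pos_of_ne_zero (by omega)
  obtain ⟨v, hmin, hli⟩ := hWR
  set L := Submodule.span ℤ ({embQ D x y, embQ D ((D : ℝ) * y) x} : Set (Fin 2 → ℝ)) with hL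
  obtain ⟨hv0L, hv0ne, hv0m⟩ := hmin 0
  obtain ⟨hv1L, hv1ne, hv1m⟩ := hmin 1
  obtain ⟨a₀, b₀, hab₀⟩ := Submodule.mem_span_pair.mp hv0L
  obtain ⟨a₁, b₁, hab₁⟩ := Submodule.mem_span_pair.mp hv1L
  obtain ⟨U₀, hU₀⟩ : ∃ u : ℤ, u = a₀*x + b₀*(D:ℤ)*y := ⟨_, rfl⟩
  obtain ⟨T₀, hT₀⟩ : ∃ u : ℤ, u = a₀*y + b₀*x := ⟨_, rfl⟩
  obtain ⟨U₁, hU₁⟩ : ∃ u : ℤ, u = a₁*x + b₁*(D:ℤ)*y := ⟨_, rfl⟩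
  obtain ⟨T₁, hT₁⟩ : ∃ u : ℤ, u = a₁*y + b₁*x := ⟨_, rfl⟩
  have hv0 : v 0 = embQ (D:ℝ) (U₀:ℝ) (T₀:ℝ) := by
    rw [← hab₀]
    have e1 : ((U₀:ℤ):ℝ) = (a₀:ℝ)*(x:ℝ) + (b₀:ℝ)*((D:ℝ)*(y:ℝ)) := by rw [hU₀]; push_cast; ring
    have e2 : ((T₀:ℤ):ℝ) = (a₀:ℝ)*(y:ℝ) + (b₀:ℝ)*(x:ℝ) := by rw [hT₀]; push_cast; ring
    rw [e1, e2, ← embQ_add_smul, Int.cast_smul_eq_zsmul, Int.cast_smul_eq_zsmul]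
  have hv1 : v 1 = embQ (D:ℝ) (U₁:ℝ) (T₁:ℝ) := by
    rw [← hab₁]
    have e1 : ((U₁:ℤ):ℝ) = (a₁:ℝ)*(x:ℝ) + (b₁:ℝ)*((D:ℝ)*(y:ℝ)) := by rw [hU₁]; push_cast; ring
    have e2 : ((T₁:ℤ):ℝ) = (a₁:ℝ)*(y:ℝ) + (b₁:ℝ)*(x:ℝ) := by rw [hT₁]; push_cast; ring
    rw [e1, e2, ← embQ_add_smul, Int.cast_smul_eq_zsmul, Int.cast_smul_eq_zsmul]
  have indep2 : ∀ c₀ c₁ : ℝ, c₀ • v 0 + c₁ • v 1 = 0 → c₀ = 0 ∧ c₁ = 0 := by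
    intro c₀ c₁ hcc
    have h := Fintype.linearIndependent_iff.mp hli ![c₀, c₁]
      (by simpa [Fin.sum_univ_two] using hcc)
    exact ⟨h 0, h 1⟩
  obtain ⟨k, hkdef⟩ : ∃ u : ℤ, u = U₀*T₁ - U₁*T₀ := ⟨_, rfl⟩
  have hk0 : k ≠ 0 := by
    intro hkz
    have hz : U₀*T₁ - U₁*T₀ = 0 := by rw [← hkdef]; exact hkz
    have e1 : (T₁:ℝ)*(U₀:ℝ) + (-(T₀:ℝ))*(U₁:ℝ) = 0 := by
      have : ((U₀*T₁ - U₁*T₀ : ℤ):ℝ) = 0 := by exact_mod_cast hz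
      push_cast at this; linarith
    have e2 : (T₁:ℝ)*(T₀:ℝ) + (-(T₀:ℝ))*(T₁:ℝ) = 0 := by ring
    have h1 : (T₁:ℝ) • v 0 + (-(T₀:ℝ)) • v 1 = 0 := by
      rw [hv0, hv1, embQ_add_smul, e1, e2, embQ_zero]
    obtain ⟨hT₁z, hT₀z⟩ := indep2 _ _ h1
    have e3 : (U₁:ℝ)*(U₀:ℝ) + (-(U₀:ℝ))*(U₁:ℝ) = 0 := by ring
    have e4 : (U₁:ℝ)*(T₀:ℝ) + (-(U₀:ℝ))*(T₁:ℝ) = 0 := by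
      have : ((U₀*T₁ - U₁*T₀ : ℤ):ℝ) = 0 := by exact_mod_cast hz
      push_cast at this; linarith
    have h2 : (U₁:ℝ) • v 0 + (-(U₀:ℝ)) • v 1 = 0 := by
      rw [hv0, hv1, embQ_add_smul, e3, e4, embQ_zero]
    obtain ⟨hU₁z, hU₀z⟩ := indep2 _ _ h2
    apply hv0ne
    rw [hv0]
    have : (U₀:ℝ) = 0 := by linarith [neg_eq_zero.mp hU₀z]
    rw [this, show (T₀:ℝ) = 0 by linarith [neg_eq_zero.mp hT₀z], embQ_zero]

  have hm0R : sqnorm (v 0) = 2*(U₀:ℝ)^2 + 2*(D:ℝ)*(T₀:ℝ)^2 := by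
    rw [hv0, sqnorm_embQ _ _ _ hDR]
  have hm1R : sqnorm (v 1) = 2*(U₁:ℝ)^2 + 2*(D:ℝ)*(T₁:ℝ)^2 := by
    rw [hv1, sqnorm_embQ _ _ _ hDR]
  have hmint : U₀^2 + (D:ℤ)*T₀^2 = U₁^2 + (D:ℤ)*T₁^2 := by
    have hR : 2*(U₀:ℝ)^2 + 2*(D:ℝ)*(T₀:ℝ)^2 = 2*(U₁:ℝ)^2 + 2*(D:ℝ)*(T₁:ℝ)^2 := by
      rw [← hm0R, ← hm1R, hv0m, hv1m]
    have : ((U₀^2 + (D:ℤ)*T₀^2 : ℤ):ℝ) = ((U₁^2 + (D:ℤ)*T₁^2 : ℤ):ℝ) := by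
      push_cast; linarith
    exact_mod_cast this
  obtain ⟨M₀, hM₀⟩ : ∃ u : ℤ, u = U₀^2 + (D:ℤ)*T₀^2 := ⟨_, rfl⟩
  have hne00 : ¬(U₀ = 0 ∧ T₀ = 0) := by
    rintro ⟨h1, h2⟩
    apply hv0ne
    rw [hv0, h1, h2]
    norm_num
    exact embQ_zero _
  have hM₀pos : 0 < M₀ := by
    rw [hM₀]; exact int_posM (D:ℤ) U₀ T₀ (by exact_mod_cast hD2) hne00
  have hlow : ∀ z, z ∈ L → z ≠ 0 → lambda1 L ≤ sqnorm z := by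
    intro z hz h0
    apply csInf_le
    · exact ⟨0, by rintro r ⟨w, hw, hw0, rfl⟩; exact sqnorm_nonneg' w⟩
    · exact ⟨z, hz, h0, rfl⟩
  have hmR : lambda1 L = 2*(M₀:ℝ) := by
    rw [← hv0m, hm0R, hM₀]; push_cast; ring
  have hcomb2 : ∀ e : ℤ, M₀ ≤ (U₀+e*U₁)^2 + (D:ℤ)*(T₀+e*T₁)^2 ∨ ((1:ℝ) • v 0 + ((e:ℤ):ℝ) • v 1 = 0) := by
    intro e
    by_cases hne : (1:ℝ) • v 0 + ((e:ℤ):ℝ) • v 1 = 0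
    · exact Or.inr hne
    left
    have eU : ((U₀ + e*U₁ : ℤ):ℝ) = (1:ℝ)*(U₀:ℝ) + ((e:ℤ):ℝ)*(U₁:ℝ) := by push_cast; ring
    have eT : ((T₀ + e*T₁ : ℤ):ℝ) = (1:ℝ)*(T₀:ℝ) + ((e:ℤ):ℝ)*(T₁:ℝ) := by push_cast; ring
    have hvec : (1:ℝ) • v 0 + ((e:ℤ):ℝ) • v 1
        = embQ (D:ℝ) ((U₀ + e*U₁ : ℤ):ℝ) ((T₀ + e*T₁ : ℤ):ℝ) := by
      rw [hv0, hv1, embQ_add_smul, eU, eT]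
    have hmem : (1:ℝ) • v 0 + ((e:ℤ):ℝ) • v 1 ∈ L := by
      rw [show ((1:ℝ)) = ((1:ℤ):ℝ) by norm_num, Int.cast_smul_eq_zsmul, Int.cast_smul_eq_zsmul]
      exact Submodule.add_mem _ (Submodule.smul_mem _ _ hv0L) (Submodule.smul_mem _ _ hv1L)
    have hge := hlow _ hmem hne
    rw [hvec, sqnorm_embQ _ _ _ hDR, hmR] at hge
    have hint : (M₀:ℝ) ≤ (((U₀+e*U₁)^2 + (D:ℤ)*(T₀+e*T₁)^2 : ℤ):ℝ) := by
      push_cast at hge ⊢; linarith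
    exact_mod_cast hint
  have hWp : M₀ ≤ (U₀+1*U₁)^2 + (D:ℤ)*(T₀+1*T₁)^2 := by
    rcases hcomb2 1 with h | h
    · exact h
    · exfalso
      obtain ⟨h1, -⟩ := indep2 _ _ h
      norm_num at h1
  have hWm : M₀ ≤ (U₀+(-1)*U₁)^2 + (D:ℤ)*(T₀+(-1)*T₁)^2 := by
    rcases hcomb2 (-1) with h | h
    · exact h
    · exfalso
      obtain ⟨h1, -⟩ := indep2 _ _ h
      norm_num at h1
  -- generation lemma
  have gen : ∀ X Y : ℤ, embQ (D:ℝ) (X:ℝ) (Y:ℝ) ∈ L →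
      ∃ cc ee : ℤ, X = cc*U₀ + ee*U₁ ∧ Y = cc*T₀ + ee*T₁ := by
    intro X Y hmem
    have hkR : ((k:ℤ):ℝ) ≠ 0 := Int.cast_ne_zero.mpr hk0
    have hkR' : ((k:ℤ):ℝ) = (U₀:ℝ)*(T₁:ℝ) - (U₁:ℝ)*(T₀:ℝ) := by
      rw [hkdef]; push_cast; ring
    obtain ⟨r₀, hr₀⟩ : ∃ u : ℝ, u = ((X:ℝ)*(T₁:ℝ) - (Y:ℝ)*(U₁:ℝ))/((k:ℤ):ℝ) := ⟨_, rfl⟩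
    obtain ⟨r₁, hr₁⟩ : ∃ u : ℝ, u = ((U₀:ℝ)*(Y:ℝ) - (T₀:ℝ)*(X:ℝ))/((k:ℤ):ℝ) := ⟨_, rfl⟩
    have hu : r₀*(U₀:ℝ) + r₁*(U₁:ℝ) = (X:ℝ) := by
      rw [hr₀, hr₁, div_mul_eq_mul_div, div_mul_eq_mul_div, ← add_div,
        div_eq_iff hkR]
      linear_combination (-(X:ℝ))*hkR'
    have ht : r₀*(T₀:ℝ) + r₁*(T₁:ℝ) = (Y:ℝ) := by
      rw [hr₀, hr₁, div_mul_eq_mul_div, div_mul_eq_mul_div, ← add_div,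
        div_eq_iff hkR]
      linear_combination (-(Y:ℝ))*hkR'
    obtain ⟨q₀, hq₀⟩ : ∃ u : ℤ, u = round r₀ := ⟨_, rfl⟩
    obtain ⟨q₁, hq₁⟩ : ∃ u : ℤ, u = round r₁ := ⟨_, rfl⟩
    obtain ⟨f₀, hf₀⟩ : ∃ u : ℝ, u = r₀ - (q₀:ℝ) := ⟨_, rfl⟩
    obtain ⟨f₁, hf₁⟩ : ∃ u : ℝ, u = r₁ - (q₁:ℝ) := ⟨_, rfl⟩
    have hcombfull : r₀ • v 0 + r₁ • v 1 = embQ (D:ℝ) (X:ℝ) (Y:ℝ) := by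
      rw [hv0, hv1, embQ_add_smul, hu, ht]
    have hβeq : f₀ • v 0 + f₁ • v 1
        = embQ (D:ℝ) (X:ℝ) (Y:ℝ) - ((q₀:ℝ) • v 0 + (q₁:ℝ) • v 1) := by
      rw [← hcombfull, hf₀, hf₁, sub_smul, sub_smul]; abel
    have hmemβ : f₀ • v 0 + f₁ • v 1 ∈ L := by
      rw [hβeq]
      refine Submodule.sub_mem _ hmem (Submodule.add_mem _ ?_ ?_)
      · rw [Int.cast_smul_eq_zsmul]; exact Submodule.smul_mem _ _ hv0L
      · rw [Int.cast_smul_eq_zsmul]; exact Submodule.smul_mem _ _ hv1L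
    have hfb₀ : |f₀| ≤ 1/2 := by rw [hf₀, hq₀]; exact abs_sub_round r₀
    have hfb₁ : |f₁| ≤ 1/2 := by rw [hf₁, hq₁]; exact abs_sub_round r₁
    have hsq₀ : f₀^2 ≤ 1/4 := by nlinarith [abs_nonneg f₀, sq_abs f₀]
    have hsq₁ : f₁^2 ≤ 1/4 := by nlinarith [abs_nonneg f₁, sq_abs f₁]
    have hMR : (M₀:ℝ) = (U₀:ℝ)^2 + (D:ℝ)*(T₀:ℝ)^2 := by rw [hM₀]; push_cast; ring
    have hM1R : (M₀:ℝ) = (U₁:ℝ)^2 + (D:ℝ)*(T₁:ℝ)^2 := by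
      rw [hM₀, hmint]; push_cast; ring
    have hWpR : (M₀:ℝ) ≤ ((U₀:ℝ)+(U₁:ℝ))^2 + (D:ℝ)*((T₀:ℝ)+(T₁:ℝ))^2 := by
      have := hWp
      have hc : ((M₀:ℤ):ℝ) ≤ (((U₀+1*U₁)^2 + (D:ℤ)*(T₀+1*T₁)^2 : ℤ):ℝ) := by exact_mod_cast this
      push_cast at hc; linarith [hc]
    have hWmR : (M₀:ℝ) ≤ ((U₀:ℝ)-(U₁:ℝ))^2 + (D:ℝ)*((T₀:ℝ)-(T₁:ℝ))^2 := by
      have := hWm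
      have hc : ((M₀:ℤ):ℝ) ≤ (((U₀+(-1)*U₁)^2 + (D:ℤ)*(T₀+(-1)*T₁)^2 : ℤ):ℝ) := by exact_mod_cast this
      push_cast at hc; linarith [hc]
    have hM₀posR : (0:ℝ) < (M₀:ℝ) := by exact_mod_cast hM₀pos
    have h3 : (0:ℝ) ≤ (M₀:ℝ) - 2*((U₀:ℝ)*(U₁:ℝ) + (D:ℝ)*(T₀:ℝ)*(T₁:ℝ)) := by
      nlinarith [hWmR, hMR, hM1R]
    have h4 : (0:ℝ) ≤ (M₀:ℝ) + 2*((U₀:ℝ)*(U₁:ℝ) + (D:ℝ)*(T₀:ℝ)*(T₁:ℝ)) := by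
      nlinarith [hWpR, hMR, hM1R]
    have hcomb' : f₀ • v 0 + f₁ • v 1
        = embQ (D:ℝ) (f₀*(U₀:ℝ)+f₁*(U₁:ℝ)) (f₀*(T₀:ℝ)+f₁*(T₁:ℝ)) := by
      rw [hv0, hv1, embQ_add_smul]
    have hlt : sqnorm (f₀ • v 0 + f₁ • v 1) < lambda1 L := by
      rw [hcomb', sqnorm_embQ _ _ _ hDR, hmR]
      nlinarith [hsq₀, hsq₁, hM₀posR, hMR, hM1R,
        mul_nonneg h3 (sq_nonneg (f₀+f₁)), mul_nonneg h4 (sq_nonneg (f₀-f₁)),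
        mul_nonneg (le_of_lt hM₀posR) (by linarith : (0:ℝ) ≤ 1/2 - f₀^2 - f₁^2)]
    have hzero : f₀ • v 0 + f₁ • v 1 = 0 := by
      by_contra hne
      exact absurd (hlow _ hmemβ hne) (not_le.mpr hlt)
    obtain ⟨hf0z, hf1z⟩ := indep2 _ _ hzero
    have hr0q : r₀ = (q₀:ℝ) := by
      have := hf₀ ▸ hf0z; linarith [sub_eq_zero.mp (hf₀ ▸ hf0z)]
    have hr1q : r₁ = (q₁:ℝ) := by
      linarith [sub_eq_zero.mp (hf₁ ▸ hf1z)]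
    refine ⟨q₀, q₁, ?_, ?_⟩
    · have : (X:ℝ) = (q₀:ℝ)*(U₀:ℝ) + (q₁:ℝ)*(U₁:ℝ) := by rw [← hu, hr0q, hr1q]
      exact_mod_cast this
    · have : (Y:ℝ) = (q₀:ℝ)*(T₀:ℝ) + (q₁:ℝ)*(T₁:ℝ) := by rw [← ht, hr0q, hr1q]
      exact_mod_cast this
  -- apply generation to the two generators
  have hg₀mem : embQ (D:ℝ) (x:ℝ) (y:ℝ) ∈ L := by
    rw [hL]; exact Submodule.subset_span (Set.mem_insert _ _)
  have hg₁mem : embQ (D:ℝ) (((D:ℤ)*y : ℤ):ℝ) (x:ℝ) ∈ L := by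
    have e : (((D:ℤ)*y : ℤ):ℝ) = (D:ℝ)*(y:ℝ) := by push_cast; ring
    rw [e, hL]
    exact Submodule.subset_span (Set.mem_insert_of_mem _ rfl)
  obtain ⟨c₀, c₁, hx1, hy1⟩ := gen x y hg₀mem
  obtain ⟨e₀, e₁, hDy, hx2⟩ := gen ((D:ℤ)*y) x hg₁mem
  have hNk : x^2 - (D:ℤ)*y^2 = (c₀*e₁ - c₁*e₀)*k := by
    rw [hkdef]
    linear_combination x*hx2 + (e₀*(T₀:ℤ)+e₁*T₁)*hx1 - y*hDy - (e₀*U₀+e₁*U₁)*hy1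
  have h₀ : U₀^2 - (D:ℤ)*T₀^2 = k*((a₀^2 - (D:ℤ)*b₀^2)*(c₀*e₁ - c₁*e₀)) := by
    have e : U₀^2 - (D:ℤ)*T₀^2 = (a₀^2 - (D:ℤ)*b₀^2)*(x^2 - (D:ℤ)*y^2) := by
      rw [hU₀, hT₀]; ring
    rw [e, hNk]; ring
  have h₁ : U₁^2 - (D:ℤ)*T₁^2 = k*((a₁^2 - (D:ℤ)*b₁^2)*(c₀*e₁ - c₁*e₀)) := by
    have e : U₁^2 - (D:ℤ)*T₁^2 = (a₁^2 - (D:ℤ)*b₁^2)*(x^2 - (D:ℤ)*y^2) := by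
      rw [hU₁, hT₁]; ring
    rw [e, hNk]; ring
  have hDmod : (D:ℤ) % 4 = 2 := by omega
  exact hk0 (key_aux (D:ℤ) hDmod k.natAbs k U₀ T₀ U₁ T₁ _ _ rfl hmint h₀ h₁ hkdef)
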